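/- For every α > 0, the function w̃(k) = Σ_{m=1}^∞ (1 − cos(k m))/m^{1+α} is continuous and strictly increasing on the interval [0, π]. -/

import Mathlib

open scoped BigOperators

noncomputable section

/-- The dispersion symbol `w̃(k) = Σ_{m=1}^∞ (1 − cos(km))/m^{1+α}`. -/
def wt (α k : ℝ) : ℝ :=
  ∑' m : ℕ, (1 - Real.cos (k * ((m + 1 : ℕ) : ℝ))) / ((m + 1 : ℕ) : ℝ) ^ (1 + α)

open Real MeasureTheory Set

lemma geom_cos {r : ℝ} (hr0 : 0 < r) (hr1 : r < 1) (k : ℝ) :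
    HasSum (fun n : ℕ => r ^ (n + 1) * Real.cos (k * (n + 1)))
      ((r * Real.cos k - r ^ 2) / (1 - 2 * r * Real.cos k + r ^ 2)) := by
  set z : ℂ := (r : ℂ) * Complex.exp (k * Complex.I) with hz
  have hnorm : ‖z‖ < 1 := by
    rw [hz, norm_mul, Complex.norm_exp_ofReal_mul_I, mul_one, Complex.norm_real,
      Real.norm_of_nonneg hr0.le]
    exact hr1
  have h1 : HasSum (fun n : ℕ => z ^ n) (1 - z)⁻¹ := hasSum_geometric_of_norm_lt_one hnorm
  have h2 : HasSum (fun n : ℕ => z ^ (n + 1)) (z * (1 - z)⁻¹) := by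
    have := h1.mul_left z
    simpa [pow_succ, mul_comm] using this
  have h3 := Complex.hasSum_re h2
  have hzre : z.re = r * Real.cos k := by
    simp [hz, Complex.mul_re, Complex.exp_ofReal_mul_I_re, Complex.exp_ofReal_mul_I_im]
  have hzim : z.im = r * Real.sin k := by
    simp [hz, Complex.mul_im, Complex.exp_ofReal_mul_I_re, Complex.exp_ofReal_mul_I_im]
  have hsc : Real.sin k ^ 2 + Real.cos k ^ 2 = 1 := Real.sin_sq_add_cos_sq k
  have hre : ∀ n : ℕ, (z ^ (n + 1)).re = r ^ (n + 1) * Real.cos (k * (n + 1)) := by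
    intro n
    have he : z ^ (n + 1) =
        ((r ^ (n + 1) : ℝ) : ℂ) * Complex.exp (((k * (n + 1) : ℝ)) * Complex.I) := by
      rw [hz, mul_pow, ← Complex.exp_nat_mul]
      push_cast
      ring_nf
    rw [he, Complex.re_ofReal_mul, Complex.exp_ofReal_mul_I_re]
  have hns : Complex.normSq (1 - z) = 1 - 2 * r * Real.cos k + r ^ 2 := by
    rw [Complex.normSq_apply]
    simp only [Complex.sub_re, Complex.sub_im, Complex.one_re, Complex.one_im, hzre, hzim]
    nlinarith [hsc]
  have hD : 0 < 1 - 2 * r * Real.cos k + r ^ 2 := by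
    nlinarith [Real.cos_le_one k, sq_nonneg (1 - r)]
  have him : (z * (1 - z)⁻¹).re = (r * Real.cos k - r ^ 2) / (1 - 2 * r * Real.cos k + r ^ 2) := by
    rw [← div_eq_mul_inv, Complex.div_re, hns]
    simp only [Complex.sub_re, Complex.sub_im, Complex.one_re, Complex.one_im, hzre, hzim]
    rw [← add_div]
    congr 1
    linear_combination (-r ^ 2) * hsc
  rw [← him]
  simpa only [hre] using h3

lemma geom_one_sub_cos {r : ℝ} (hr0 : 0 < r) (hr1 : r < 1) (k : ℝ) :
    HasSum (fun n : ℕ => r ^ (n + 1) * (1 - Real.cos (k * (n + 1))))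
      (r / (1 - r) - (r * Real.cos k - r ^ 2) / (1 - 2 * r * Real.cos k + r ^ 2)) := by
  have hg : HasSum (fun n : ℕ => r ^ (n + 1)) (r / (1 - r)) := by
    have := (hasSum_geometric_of_lt_one hr0.le hr1).mul_left r
    rw [div_eq_mul_inv]
    simpa [pow_succ, mul_comm] using this
  have := hg.sub (geom_cos hr0 hr1 k)
  simpa [mul_sub] using this

lemma summable_aux {α : ℝ} (hα : 0 < α) :
    Summable (fun n : ℕ => 2 / ((n + 1 : ℕ) : ℝ) ^ (1 + α)) := by
  have h : Summable (fun n : ℕ => 1 / (n : ℝ) ^ (1 + α)) :=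
    Real.summable_one_div_nat_rpow.mpr (by linarith)
  have h2 := ((summable_nat_add_iff 1).mpr h).mul_left 2
  simpa [div_eq_mul_inv] using h2

lemma wt_term_bound {α : ℝ} (k : ℝ) (n : ℕ) :
    ‖(1 - Real.cos (k * ((n + 1 : ℕ) : ℝ))) / ((n + 1 : ℕ) : ℝ) ^ (1 + α)‖
      ≤ 2 / ((n + 1 : ℕ) : ℝ) ^ (1 + α) := by
  have hpos : (0 : ℝ) < ((n + 1 : ℕ) : ℝ) ^ (1 + α) := by positivity
  rw [Real.norm_eq_abs, abs_div, abs_of_pos hpos]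
  gcongr
  exact abs_le.mpr ⟨by nlinarith [Real.cos_le_one (k * ((n + 1 : ℕ) : ℝ))],
    by nlinarith [Real.neg_one_le_cos (k * ((n + 1 : ℕ) : ℝ))]⟩

lemma summable_wt {α : ℝ} (hα : 0 < α) (k : ℝ) :
    Summable (fun n : ℕ => (1 - Real.cos (k * ((n + 1 : ℕ) : ℝ))) / ((n + 1 : ℕ) : ℝ) ^ (1 + α)) :=
  Summable.of_norm_bounded (summable_aux hα) (wt_term_bound k)

lemma gamma_lint {α : ℝ} (hα : 0 < α) {c : ℝ} (hc : 0 < c) {w : ℝ} (hw : 0 ≤ w) :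
    ∫⁻ t in Ioi (0:ℝ), ENNReal.ofReal (t ^ α * Real.exp (-(c * t)) * w)
      = ENNReal.ofReal ((1 / c) ^ (α + 1) * Real.Gamma (α + 1) * w) := by
  have hint : IntegrableOn (fun t : ℝ => t ^ α * Real.exp (-(c * t)) * w) (Ioi 0) volume := by
    have h2 : IntegrableOn (fun x : ℝ => x ^ α * Real.exp (-c * x ^ (1:ℝ)) * w) (Ioi 0) volume :=
      (integrableOn_rpow_mul_exp_neg_mul_rpow (s := α) (p := 1) (b := c)
        (by linarith) one_pos hc).mul_const w
    refine h2.congr_fun (fun t ht => ?_) measurableSet_Ioi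
    simp [Real.rpow_one, neg_mul]
  rw [← ofReal_integral_eq_lintegral_ofReal hint ?_]
  · congr 1
    calc ∫ t in Ioi (0:ℝ), t ^ α * Real.exp (-(c * t)) * w
        = (∫ t in Ioi (0:ℝ), t ^ (α + 1 - 1) * Real.exp (-(c * t))) * w := by
          rw [← integral_mul_const]
          norm_num
      _ = (1 / c) ^ (α + 1) * Real.Gamma (α + 1) * w := by
          rw [integral_rpow_mul_exp_neg_mul_Ioi (by linarith) hc]
  · filter_upwards [ae_restrict_mem measurableSet_Ioi] with t ht
    exact mul_nonneg (mul_nonneg (Real.rpow_nonneg (le_of_lt ht) α) (Real.exp_pos _).le) hw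

lemma one_sub_cos_nonneg (x : ℝ) : 0 ≤ 1 - Real.cos x :=
  sub_nonneg.mpr (Real.cos_le_one x)

lemma wt_repr {α : ℝ} (hα : 0 < α) (k : ℝ) :
    ∫⁻ t in Ioi (0:ℝ), ENNReal.ofReal
        (t ^ α * ∑' n : ℕ, Real.exp (-t) ^ (n + 1) * (1 - Real.cos (k * ((n : ℝ) + 1))))
      = ENNReal.ofReal (Real.Gamma (α + 1) * wt α k) := by
  have hΓ : 0 < Real.Gamma (α + 1) := Real.Gamma_pos_of_pos (by linarith)
  have hpt : ∀ t, t ∈ Ioi (0:ℝ) →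
      ENNReal.ofReal (t ^ α * ∑' n : ℕ, Real.exp (-t) ^ (n + 1) * (1 - Real.cos (k * ((n : ℝ) + 1))))
        = ∑' n : ℕ, ENNReal.ofReal
            (t ^ α * (Real.exp (-t) ^ (n + 1) * (1 - Real.cos (k * ((n : ℝ) + 1))))) := by
    intro t ht
    have hr0 : 0 < Real.exp (-t) := Real.exp_pos _
    have hr1 : Real.exp (-t) < 1 := Real.exp_lt_one_iff.mpr (by simpa using ht.out)
    have hs := (geom_one_sub_cos hr0 hr1 k).summable
    rw [← tsum_mul_left]
    exact ENNReal.ofReal_tsum_of_nonneg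
      (fun n => mul_nonneg (Real.rpow_nonneg (le_of_lt ht.out) α)
        (mul_nonneg (pow_nonneg hr0.le _) (one_sub_cos_nonneg _)))
      (hs.mul_left _)
  calc ∫⁻ t in Ioi (0:ℝ), ENNReal.ofReal
        (t ^ α * ∑' n : ℕ, Real.exp (-t) ^ (n + 1) * (1 - Real.cos (k * ((n : ℝ) + 1))))
      = ∫⁻ t in Ioi (0:ℝ), ∑' n : ℕ, ENNReal.ofReal
          (t ^ α * (Real.exp (-t) ^ (n + 1) * (1 - Real.cos (k * ((n : ℝ) + 1))))) :=
        setLIntegral_congr_fun measurableSet_Ioi (fun t ht => hpt t ht)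
    _ = ∑' n : ℕ, ∫⁻ t in Ioi (0:ℝ), ENNReal.ofReal
          (t ^ α * (Real.exp (-t) ^ (n + 1) * (1 - Real.cos (k * ((n : ℝ) + 1))))) := by
        refine lintegral_tsum fun n => Measurable.aemeasurable ?_
        apply Measurable.ennreal_ofReal
        fun_prop
    _ = ∑' n : ℕ, ENNReal.ofReal
          ((1 / ((n : ℝ) + 1)) ^ (α + 1) * Real.Gamma (α + 1) * (1 - Real.cos (k * ((n : ℝ) + 1)))) := by
        refine tsum_congr fun n => ?_
        have hc : (0:ℝ) < (n : ℝ) + 1 := by positivity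
        have heq : ∀ t : ℝ, t ^ α * (Real.exp (-t) ^ (n + 1) * (1 - Real.cos (k * ((n : ℝ) + 1))))
            = t ^ α * Real.exp (-(((n : ℝ) + 1) * t)) * (1 - Real.cos (k * ((n : ℝ) + 1))) := by
          intro t
          rw [← Real.exp_nat_mul]
          push_cast
          ring_nf
        simp_rw [heq]
        exact gamma_lint hα hc (one_sub_cos_nonneg _)
    _ = ENNReal.ofReal (Real.Gamma (α + 1) * wt α k) := by
        have hterm : ∀ n : ℕ,
            (1 / ((n : ℝ) + 1)) ^ (α + 1) * Real.Gamma (α + 1) * (1 - Real.cos (k * ((n : ℝ) + 1)))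
              = Real.Gamma (α + 1)
                * ((1 - Real.cos (k * ((n + 1 : ℕ) : ℝ))) / ((n + 1 : ℕ) : ℝ) ^ (1 + α)) := by
          intro n
          have hc : (0:ℝ) < (n : ℝ) + 1 := by positivity
          rw [one_div, Real.inv_rpow hc.le, add_comm 1 α]
          push_cast
          field_simp
        simp_rw [hterm]
        rw [← ENNReal.ofReal_tsum_of_nonneg
          (fun n => mul_nonneg hΓ.le (div_nonneg (one_sub_cos_nonneg _) (by positivity)))
          ((summable_wt hα k).mul_left _), tsum_mul_left]
        rfl

/-- `w̃` is continuous and strictly increasing on `[0, π]`. -/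
theorem wt_strictMono (α : ℝ) (hα : 0 < α) :
    ContinuousOn (wt α) (Set.Icc 0 Real.pi) ∧
    StrictMonoOn (wt α) (Set.Icc 0 Real.pi) := by
  have hΓ : 0 < Real.Gamma (α + 1) := Real.Gamma_pos_of_pos (by linarith)
  constructor
  · have hc : Continuous (wt α) := by
      apply continuous_tsum (u := fun n : ℕ => 2 / ((n + 1 : ℕ) : ℝ) ^ (1 + α))
      · intro n
        fun_prop
      · exact summable_aux hα
      · intro n k
        exact wt_term_bound k n
    exact hc.continuousOn
  · intro x hx y hy hxy
    -- the elementary closed form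
    set ψ : ℝ → ℝ → ℝ := fun k t =>
      t ^ α * (Real.exp (-t) / (1 - Real.exp (-t)) -
        (Real.exp (-t) * Real.cos k - Real.exp (-t) ^ 2) /
          (1 - 2 * Real.exp (-t) * Real.cos k + Real.exp (-t) ^ 2)) with hψdef
    have hrfacts : ∀ t : ℝ, t ∈ Ioi (0:ℝ) → 0 < Real.exp (-t) ∧ Real.exp (-t) < 1 := fun t ht =>
      ⟨Real.exp_pos _, Real.exp_lt_one_iff.mpr (by simpa using ht.out)⟩
    -- ψ equals the tsum integrand on Ioi 0
    have hψeq : ∀ k : ℝ, ∀ t ∈ Ioi (0:ℝ),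
        t ^ α * ∑' n : ℕ, Real.exp (-t) ^ (n + 1) * (1 - Real.cos (k * ((n : ℝ) + 1))) = ψ k t := by
      intro k t ht
      obtain ⟨hr0, hr1⟩ := hrfacts t ht
      simp only [hψdef]
      rw [(geom_one_sub_cos hr0 hr1 k).tsum_eq]
    have hrepr : ∀ k : ℝ, ∫⁻ t in Ioi (0:ℝ), ENNReal.ofReal (ψ k t)
        = ENNReal.ofReal (Real.Gamma (α + 1) * wt α k) := by
      intro k
      rw [← wt_repr hα k]
      exact (setLIntegral_congr_fun measurableSet_Ioi
        (fun t ht => by rw [hψeq k t ht])).symm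
    -- nonnegativity of ψ on Ioi 0
    have hψnonneg : ∀ k : ℝ, ∀ t ∈ Ioi (0:ℝ), 0 ≤ ψ k t := by
      intro k t ht
      obtain ⟨hr0, hr1⟩ := hrfacts t ht
      rw [← hψeq k t ht]
      refine mul_nonneg (Real.rpow_nonneg (le_of_lt ht.out) α) (tsum_nonneg fun n =>
        mul_nonneg (pow_nonneg hr0.le _) (one_sub_cos_nonneg _))
    -- strict pointwise inequality
    have hψlt : ∀ t ∈ Ioi (0:ℝ), ψ x t < ψ y t := by
      intro t ht
      obtain ⟨hr0, hr1⟩ := hrfacts t ht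
      set r := Real.exp (-t)
      have hcxy : Real.cos y < Real.cos x := Real.strictAntiOn_cos hx hy hxy
      have hDx : 0 < 1 - 2 * r * Real.cos x + r ^ 2 := by
        nlinarith [Real.cos_le_one x, sq_nonneg (1 - r)]
      have hDy : 0 < 1 - 2 * r * Real.cos y + r ^ 2 := by
        nlinarith [Real.cos_le_one y, sq_nonneg (1 - r)]
      have hG : (r * Real.cos y - r ^ 2) / (1 - 2 * r * Real.cos y + r ^ 2)
          < (r * Real.cos x - r ^ 2) / (1 - 2 * r * Real.cos x + r ^ 2) := by
        rw [div_lt_div_iff₀ hDy hDx]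
        have hid : (r * Real.cos x - r ^ 2) * (1 - 2 * r * Real.cos y + r ^ 2)
            - (r * Real.cos y - r ^ 2) * (1 - 2 * r * Real.cos x + r ^ 2)
            = r * (1 - r ^ 2) * (Real.cos x - Real.cos y) := by ring
        nlinarith [mul_pos (mul_pos hr0 (by nlinarith : (0:ℝ) < 1 - r ^ 2))
          (sub_pos.mpr hcxy)]
      have htα : 0 < t ^ α := Real.rpow_pos_of_pos ht.out α
      simp only [hψdef]
      exact mul_lt_mul_of_pos_left (sub_lt_sub_left hG (r / (1 - r))) htα
    -- measurability
    have hmeas : ∀ k : ℝ, Measurable fun t => ENNReal.ofReal (ψ k t) := by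
      intro k
      apply Measurable.ennreal_ofReal
      rw [hψdef]
      fun_prop
    have hmeasg : Measurable fun t => ENNReal.ofReal (ψ y t - ψ x t) := by
      apply Measurable.ennreal_ofReal
      rw [hψdef]
      fun_prop
    -- the difference integral is positive
    have hgpos : 0 < ∫⁻ t in Ioi (0:ℝ), ENNReal.ofReal (ψ y t - ψ x t) := by
      rw [lintegral_pos_iff_support hmeasg]
      have hsub : Ioi (0:ℝ) ⊆ Function.support fun t => ENNReal.ofReal (ψ y t - ψ x t) := by
        intro t ht
        have hp : 0 < ψ y t - ψ x t := sub_pos.mpr (hψlt t ht)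
        simp only [Function.mem_support, ne_eq, ENNReal.ofReal_eq_zero, not_le]
        exact hp
      calc (0:ENNReal) < volume.restrict (Ioi 0) (Ioi 0) := by
            rw [Measure.restrict_apply_self, Real.volume_Ioi]; exact ENNReal.zero_lt_top
        _ ≤ _ := measure_mono hsub
    -- split H y
    have hsplit : ∫⁻ t in Ioi (0:ℝ), ENNReal.ofReal (ψ y t)
        = (∫⁻ t in Ioi (0:ℝ), ENNReal.ofReal (ψ x t))
          + ∫⁻ t in Ioi (0:ℝ), ENNReal.ofReal (ψ y t - ψ x t) := by
      rw [← lintegral_add_left (hmeas x)]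
      refine setLIntegral_congr_fun measurableSet_Ioi (fun t ht => ?_)
      rw [← ENNReal.ofReal_add (hψnonneg x t ht) (sub_nonneg.mpr (hψlt t ht).le)]
      ring_nf
    have hlt : ENNReal.ofReal (Real.Gamma (α + 1) * wt α x)
        < ENNReal.ofReal (Real.Gamma (α + 1) * wt α y) := by
      rw [← hrepr x, ← hrepr y, hsplit]
      exact ENNReal.lt_add_right (by rw [hrepr x]; exact ENNReal.ofReal_ne_top) hgpos.ne'
    have : Real.Gamma (α + 1) * wt α x < Real.Gamma (α + 1) * wt α y := by
      by_contra h
      exact absurd (ENNReal.ofReal_le_ofReal (not_lt.mp h)) (not_le.mpr hlt)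
    exact (mul_lt_mul_iff_right₀ hΓ).mp this
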